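/- Let T and S be monads on the category Type u of sets. The forgetful functor from the category TAlg(T,S) of (T,S)-tensor algebras to Type u has a left adjoint (equivalently, the possibly spurious tensor T ⊗ S exists) if and only if for every cardinal α there is a cardinal bounding the cardinalities of the carriers of all α-reachable (T,S)-tensor algebras. -/

import Mathlib

open CategoryTheory

universe u

/-- A `(T,S)`-tensor algebra: a set with Eilenberg–Moore algebra structures for both
monads, satisfying the tensor law. -/
structure TensorAlg (T S : Monad (Type u)) where
  carrier : Type u
  α : T.obj carrier → carrier
  β : S.obj carrier → carrier
  α_unit : ∀ x : carrier, α (T.η.app carrier x) = x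
  α_mul : ∀ m : T.obj (T.obj carrier), α (T.μ.app carrier m) = α (T.map (TypeCat.ofHom α) m)
  β_unit : ∀ x : carrier, β (S.η.app carrier x) = x
  β_mul : ∀ m : S.obj (S.obj carrier), β (S.μ.app carrier m) = β (S.map (TypeCat.ofHom β) m)
  tensor_law : ∀ {Y Z : Type u} (p : T.obj Y) (q : S.obj Z) (f : Y × Z → carrier),
    α (T.map (TypeCat.ofHom (fun y => β (S.map (TypeCat.ofHom (fun z => f (y, z))) q))) p) =
      β (S.map (TypeCat.ofHom (fun z => α (T.map (TypeCat.ofHom (fun y => f (y, z))) p))) q)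

/-- Morphisms of tensor algebras: maps homomorphic for both structures. -/
@[ext]
structure TensorAlgHom {T S : Monad (Type u)} (A B : TensorAlg T S) where
  toFun : A.carrier → B.carrier
  map_α : ∀ m : T.obj A.carrier, toFun (A.α m) = B.α (T.map (TypeCat.ofHom toFun) m)
  map_β : ∀ m : S.obj A.carrier, toFun (A.β m) = B.β (S.map (TypeCat.ofHom toFun) m)

instance TensorAlg.instCategory {T S : Monad (Type u)} : Category (TensorAlg T S) where
  Hom A B := TensorAlgHom A B
  id A :=
    { toFun := id
      map_α := fun m => by
        show A.α m = A.α (T.map (𝟙 A.carrier) m)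
        rw [Functor.map_id_apply]
      map_β := fun m => by
        show A.β m = A.β (S.map (𝟙 A.carrier) m)
        rw [Functor.map_id_apply] }
  comp {A B C} f g :=
    { toFun := g.toFun ∘ f.toFun
      map_α := fun m => by
        show g.toFun (f.toFun (A.α m)) = C.α (T.map (TypeCat.ofHom (g.toFun ∘ f.toFun)) m)
        rw [f.map_α, g.map_α]
        congr 1
        exact (FunctorToTypes.map_comp_apply T.toFunctor (TypeCat.ofHom f.toFun) (TypeCat.ofHom g.toFun) m).symm
      map_β := fun m => by
        show g.toFun (f.toFun (A.β m)) = C.β (S.map (TypeCat.ofHom (g.toFun ∘ f.toFun)) m)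
        rw [f.map_β, g.map_β]
        congr 1
        exact (FunctorToTypes.map_comp_apply S.toFunctor (TypeCat.ofHom f.toFun) (TypeCat.ofHom g.toFun) m).symm }
  id_comp f := by apply TensorAlgHom.ext; rfl
  comp_id f := by apply TensorAlgHom.ext; rfl
  assoc f g h := by apply TensorAlgHom.ext; rfl

/-- The forgetful functor from `(T,S)`-tensor algebras to sets. -/
def forgetTAlg (T S : Monad (Type u)) : TensorAlg T S ⥤ Type u where
  obj A := A.carrier
  map f := TypeCat.ofHom (TensorAlgHom.toFun f)
  map_id _ := rfl
  map_comp _ _ := rfl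


/-- A subset of the carrier of a tensor algebra is closed if it is closed under both
algebra structures. -/
def TensorAlg.Closed {T S : Monad (Type u)} (A : TensorAlg T S) (s : Set A.carrier) : Prop :=
  (∀ m : T.obj s, A.α (T.map (TypeCat.ofHom (Subtype.val : s → A.carrier)) m) ∈ s) ∧
    (∀ m : S.obj s, A.β (S.map (TypeCat.ofHom (Subtype.val : s → A.carrier)) m) ∈ s)

/-- A tensor algebra is generated by `X` if the only closed subset containing `X` is
the whole carrier. -/
def TensorAlg.GeneratedBy {T S : Monad (Type u)} (A : TensorAlg T S)
    (X : Set A.carrier) : Prop :=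
  ∀ s : Set A.carrier, A.Closed s → X ⊆ s → s = Set.univ

/-- A tensor algebra is `c`-reachable if it is generated by a subset of cardinality
at most `c`. -/
def TensorAlg.Reachable {T S : Monad (Type u)} (A : TensorAlg T S)
    (c : Cardinal.{u}) : Prop :=
  ∃ X : Set A.carrier, Cardinal.mk X ≤ c ∧ A.GeneratedBy X

/-! A structure is induced on any set with a jointly injective family of maps into tensor
algebras, compatibly with the operations; applied to the sections of a diagram this shows that
the forgetful functor creates limits. If it has a left adjoint `F`, an algebra generated by a set
of size at most `c` receives a homomorphism from `F c` whose image is closed and contains the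
generators, hence is everything. Conversely, a map from `X` into an algebra factors through the
subalgebra generated by its image, which is `#X`-reachable, so up to isomorphism its carrier is
a subset of a fixed set of size `b`; these algebras form a solution set and the general adjoint
functor theorem applies. -/

namespace CategoryTheory.Monad

variable (T : Monad (Type u)) {X Y Z : Type u}

lemma map_map_ofHom (f : X → Y) (g : Y → Z) (m : T.obj X) :
    T.map (↾g) (T.map (↾f) m) = T.map (↾(g ∘ f)) m :=
  (T.toFunctor.map_comp_apply (↾f) (↾g) m).symm

lemma map_ofHom_η (f : X → Y) (x : X) : T.map (↾f) (T.η.app X x) = T.η.app Y (f x) :=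
  (T.η.naturality_apply (↾f) x).symm

lemma map_ofHom_μ (f : X → Y) (m : T.obj (T.obj X)) :
    T.map (↾f) (T.μ.app X m) = T.μ.app Y (T.map (↾(T.map (↾f))) m) :=
  (T.μ.naturality_apply (↾f) m).symm

end CategoryTheory.Monad

namespace TensorAlgHom

variable {T S : Monad (Type u)} {A B : TensorAlg T S} {X : Type u}

lemma apply_α_map (φ : A ⟶ B) (g : X → A.carrier) (m : T.obj X) :
    φ.toFun (A.α (T.map (↾g) m)) = B.α (T.map (↾(φ.toFun ∘ g)) m) := by
  rw [φ.map_α, Monad.map_map_ofHom]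

lemma apply_β_map (φ : A ⟶ B) (g : X → A.carrier) (m : S.obj X) :
    φ.toFun (A.β (S.map (↾g) m)) = B.β (S.map (↾(φ.toFun ∘ g)) m) := by
  rw [φ.map_β, Monad.map_map_ofHom]

end TensorAlgHom

namespace TensorAlg

variable {T S : Monad (Type u)}

section Induced

variable {ι : Type*} (A : ι → TensorAlg T S) {B : Type u} (i : ∀ k, B → (A k).carrier)
  (hi : ∀ x y, (∀ k, i k x = i k y) → x = y) (α : T.obj B → B) (β : S.obj B → B)
  (hα : ∀ k m, i k (α m) = (A k).α (T.map (↾(i k)) m))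
  (hβ : ∀ k m, i k (β m) = (A k).β (S.map (↾(i k)) m))

def induced : TensorAlg T S where
  carrier := B
  α := α
  β := β
  α_unit x := hi _ _ fun k => by rw [hα, Monad.map_ofHom_η, (A k).α_unit]
  α_mul m := hi _ _ fun k => by
    have hiα : i k ∘ α = (A k).α ∘ T.map (↾(i k)) := funext (hα k)
    rw [hα, hα, Monad.map_ofHom_μ, (A k).α_mul, Monad.map_map_ofHom, Monad.map_map_ofHom, hiα]
  β_unit x := hi _ _ fun k => by rw [hβ, Monad.map_ofHom_η, (A k).β_unit]
  β_mul m := hi _ _ fun k => by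
    have hiβ : i k ∘ β = (A k).β ∘ S.map (↾(i k)) := funext (hβ k)
    rw [hβ, hβ, Monad.map_ofHom_μ, (A k).β_mul, Monad.map_map_ofHom, Monad.map_map_ofHom, hiβ]
  tensor_law p q f := hi _ _ fun k => by
    rw [hα, hβ]
    simp only [Monad.map_map_ofHom, Function.comp_def, hα, hβ]
    exact (A k).tensor_law p q (i k ∘ f)

def inducedHom (k : ι) : induced A i hi α β hα hβ ⟶ A k where
  toFun := i k
  map_α := hα k
  map_β := hβ k

def inducedLift {C : TensorAlg T S} (φ : C.carrier → B) (ψ : ∀ k, C ⟶ A k)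
    (hψ : ∀ k x, (ψ k).toFun x = i k (φ x)) : C ⟶ induced A i hi α β hα hβ where
  toFun := φ
  map_α m := hi _ _ fun k => by
    change i k (φ (C.α m)) = i k (α (T.map (↾φ) m))
    rw [← hψ, (ψ k).map_α, hα, Monad.map_map_ofHom, funext (hψ k)]
  map_β m := hi _ _ fun k => by
    change i k (φ (C.β m)) = i k (β (S.map (↾φ) m))
    rw [← hψ, (ψ k).map_β, hβ, Monad.map_map_ofHom, funext (hψ k)]

end Induced

section Limits

open Limits

variable {J : Type u} [Category.{u} J] (F : J ⥤ TensorAlg T S)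

lemma α_map_mem_sections {Y : Type u} (g : ∀ j, Y → (F.obj j).carrier)
    (hg : ∀ {j j'} (f : j ⟶ j'), (F.map f).toFun ∘ g j = g j') (m : T.obj Y) :
    (fun j => (F.obj j).α (T.map (↾(g j)) m)) ∈ (F ⋙ forgetTAlg T S).sections := fun f => by
  change (F.map f).toFun _ = _
  rw [TensorAlgHom.apply_α_map, hg]

lemma β_map_mem_sections {Y : Type u} (g : ∀ j, Y → (F.obj j).carrier)
    (hg : ∀ {j j'} (f : j ⟶ j'), (F.map f).toFun ∘ g j = g j') (m : S.obj Y) :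
    (fun j => (F.obj j).β (S.map (↾(g j)) m)) ∈ (F ⋙ forgetTAlg T S).sections := fun f => by
  change (F.map f).toFun _ = _
  rw [TensorAlgHom.apply_β_map, hg]

def sectionsProj (j : J) : (F ⋙ forgetTAlg T S).sections → (F.obj j).carrier := fun x => x.1 j

lemma sectionsProj_naturality {j j' : J} (f : j ⟶ j') :
    (F.map f).toFun ∘ sectionsProj F j = sectionsProj F j' :=
  funext fun x => x.2 f

lemma sectionsProj_jointly_injective (x y : (F ⋙ forgetTAlg T S).sections)
    (h : ∀ j, sectionsProj F j x = sectionsProj F j y) : x = y :=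
  Subtype.ext (funext h)

def limitAlg : TensorAlg T S :=
  induced F.obj (sectionsProj F) (sectionsProj_jointly_injective F)
    (fun m => ⟨_, α_map_mem_sections F _ (sectionsProj_naturality F) m⟩)
    (fun m => ⟨_, β_map_mem_sections F _ (sectionsProj_naturality F) m⟩)
    (fun _ _ => rfl) (fun _ _ => rfl)

def limitCone : Cone F where
  pt := limitAlg F
  π.app j := { toFun := sectionsProj F j, map_α _ := rfl, map_β _ := rfl }
  π.naturality _ _ f := TensorAlgHom.ext (sectionsProj_naturality F f).symm

def limitConeIsLimit : IsLimit (limitCone F) where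
  lift s := inducedLift F.obj (sectionsProj F) (sectionsProj_jointly_injective F)
    (limitAlg F).α (limitAlg F).β (fun _ _ => rfl) (fun _ _ => rfl)
    (fun x => ⟨fun j => (s.π.app j).toFun x,
      fun f => congrFun (congrArg TensorAlgHom.toFun (s.w f)) x⟩)
    s.π.app (fun _ _ => rfl)
  fac _ _ := rfl
  uniq _ _ w := TensorAlgHom.ext (funext fun x =>
    Subtype.ext (funext fun j => congrFun (congrArg TensorAlgHom.toFun (w j)) x))

instance : HasLimits (TensorAlg T S) :=
  ⟨fun _ _ => ⟨fun F => HasLimit.mk ⟨limitCone F, limitConeIsLimit F⟩⟩⟩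

instance : PreservesLimits (forgetTAlg T S) :=
  ⟨⟨fun {F} => preservesLimit_of_preserves_limit_cone (limitConeIsLimit F)
    (Types.limitConeIsLimit.{u, u} (F ⋙ forgetTAlg T S))⟩⟩

end Limits

variable {A B : TensorAlg T S}

section Closed

variable {s t : Set A.carrier} {X : Type u}

lemma Closed.α_map_mem (hs : A.Closed s) (g : X → A.carrier) (hg : ∀ x, g x ∈ s)
    (m : T.obj X) : A.α (T.map (↾g) m) ∈ s := by
  have := hs.1 (T.map (↾(Set.codRestrict g s hg)) m)
  rwa [Monad.map_map_ofHom] at this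

lemma Closed.β_map_mem (hs : A.Closed s) (g : X → A.carrier) (hg : ∀ x, g x ∈ s)
    (m : S.obj X) : A.β (S.map (↾g) m) ∈ s := by
  have := hs.2 (S.map (↾(Set.codRestrict g s hg)) m)
  rwa [Monad.map_map_ofHom] at this

lemma closed_univ : A.Closed Set.univ :=
  ⟨fun _ => trivial, fun _ => trivial⟩

lemma closed_sInter {C : Set (Set A.carrier)} (hC : ∀ s ∈ C, A.Closed s) :
    A.Closed (⋂₀ C) :=
  ⟨fun m => Set.mem_sInter.2 fun s hs => (hC s hs).α_map_mem _ (fun x => x.2 s hs) m,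
    fun m => Set.mem_sInter.2 fun s hs => (hC s hs).β_map_mem _ (fun x => x.2 s hs) m⟩

lemma Closed.image (ht : A.Closed t) (φ : A ⟶ B) : B.Closed (φ.toFun '' t) := by
  let lift : φ.toFun '' t → t := fun y => ⟨y.2.choose, y.2.choose_spec.1⟩
  have hlift : (φ.toFun ∘ fun y => (lift y : A.carrier)) = Subtype.val :=
    funext fun y => y.2.choose_spec.2
  refine ⟨fun m => ⟨_, ht.α_map_mem _ (fun y => (lift y).2) m, ?_⟩,
    fun m => ⟨_, ht.β_map_mem _ (fun y => (lift y).2) m, ?_⟩⟩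
  · rw [TensorAlgHom.apply_α_map, hlift]
  · rw [TensorAlgHom.apply_β_map, hlift]

lemma closed_range (φ : A ⟶ B) : B.Closed (Set.range φ.toFun) := by
  simpa only [Set.image_univ] using closed_univ.image φ

lemma GeneratedBy.surjective {Y : Set B.carrier} (hY : B.GeneratedBy Y) (φ : A ⟶ B)
    (hYφ : Y ⊆ Set.range φ.toFun) : Function.Surjective φ.toFun :=
  Set.range_eq_univ.1 (hY _ (closed_range φ) hYφ)

variable (A) in
def closure (s : Set A.carrier) : Set A.carrier :=
  ⋂₀ {t | A.Closed t ∧ s ⊆ t}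

variable (s) in
lemma closed_closure : A.Closed (A.closure s) :=
  closed_sInter fun _ ht => ht.1

lemma subset_closure : s ⊆ A.closure s :=
  fun _ hx => Set.mem_sInter.2 fun _ ht => ht.2 hx

lemma closure_minimal (ht : A.Closed t) (hst : s ⊆ t) : A.closure s ⊆ t :=
  Set.sInter_subset_of_mem ⟨ht, hst⟩

end Closed

variable (A) in
def subalgebra (s : Set A.carrier) (hs : A.Closed s) : TensorAlg T S :=
  induced (fun _ : Unit => A) (fun _ => Subtype.val) (fun _ _ h => Subtype.ext (h ()))
    (fun m => ⟨_, hs.1 m⟩) (fun m => ⟨_, hs.2 m⟩) (fun _ _ => rfl) (fun _ _ => rfl)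

def subalgebraInclusion (s : Set A.carrier) (hs : A.Closed s) : A.subalgebra s hs ⟶ A :=
  inducedHom _ _ _ _ _ _ _ ()

lemma generatedBy_preimage_closure (s : Set A.carrier) :
    (A.subalgebra (A.closure s) (closed_closure s)).GeneratedBy (Subtype.val ⁻¹' s) := by
  intro t ht hst
  have hcl : A.closure s ⊆ Subtype.val '' t :=
    closure_minimal (ht.image (subalgebraInclusion _ _)) fun x hx =>
      ⟨⟨x, subset_closure hx⟩, hst hx, rfl⟩
  exact Set.eq_univ_of_forall fun x => Subtype.val_injective.mem_set_image.1 (hcl x.2)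

lemma exists_reachable_factorization (D : TensorAlg T S) {X : Type u} (h : X → D.carrier) :
    ∃ (A : TensorAlg T S) (a : X → A.carrier) (φ : A ⟶ D),
      A.Reachable (Cardinal.mk X) ∧ φ.toFun ∘ a = h := by
  refine ⟨D.subalgebra _ (closed_closure (Set.range h)),
    fun x => ⟨h x, subset_closure ⟨x, rfl⟩⟩, subalgebraInclusion _ _,
    ⟨_, ?_, generatedBy_preimage_closure _⟩, rfl⟩
  exact (Cardinal.mk_preimage_of_injective _ _ Subtype.val_injective).trans Cardinal.mk_range_le

variable (A) in
def transport {Y : Type u} (e : A.carrier ≃ Y) : TensorAlg T S :=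
  induced (fun _ : Unit => A) (fun _ => e.symm) (fun _ _ h => e.symm.injective (h ()))
    (fun m => e (A.α (T.map (↾e.symm) m))) (fun m => e (A.β (S.map (↾e.symm) m)))
    (fun _ _ => e.symm_apply_apply _) (fun _ _ => e.symm_apply_apply _)

def transportHom {Y : Type u} (e : A.carrier ≃ Y) : A.transport e ⟶ A :=
  inducedHom _ _ _ _ _ _ _ ()

lemma Reachable.mk_le_of_adjunction {c : Cardinal.{u}} (hA : A.Reachable c)
    {F : Type u ⥤ TensorAlg T S} (adj : F ⊣ forgetTAlg T S) :
    Cardinal.mk A.carrier ≤ Cardinal.mk (F.obj c.out).carrier := by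
  obtain ⟨X, hXc, hX⟩ := hA
  rcases isEmpty_or_nonempty A.carrier with hempty | ⟨⟨a₀⟩⟩
  · simp
  obtain ⟨e⟩ : Nonempty (X ↪ c.out) := by rwa [← Cardinal.le_def, Cardinal.mk_out]
  let g : c.out → A.carrier := Function.extend e Subtype.val fun _ => a₀
  let φ : F.obj c.out ⟶ A := (adj.homEquiv _ _).symm (↾g)
  have hφ : adj.unit.app _ ≫ (forgetTAlg T S).map φ = ↾g :=
    (adj.homEquiv_unit _ _ φ).symm.trans ((adj.homEquiv _ _).apply_symm_apply _)
  refine Cardinal.mk_le_of_surjective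
    (hX.surjective φ fun x hx => ⟨adj.unit.app _ (e ⟨x, hx⟩), ?_⟩)
  change (adj.unit.app _ ≫ (forgetTAlg T S).map φ) _ = _
  rw [hφ]
  exact e.injective.extend_apply Subtype.val (fun _ => a₀) ⟨x, hx⟩

end TensorAlg

/-- Unbundled tensor algebra structures on a fixed carrier: unlike `TensorAlg T S`, they form a
`Type u`, which is what indexing a solution set requires. -/
structure TensorStructure (T S : Monad (Type u)) (X : Type u) where
  α : T.obj X → X
  β : S.obj X → X
  α_unit : ∀ x : X, α (T.η.app X x) = x
  α_mul : ∀ m : T.obj (T.obj X), α (T.μ.app X m) = α (T.map (TypeCat.ofHom α) m)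
  β_unit : ∀ x : X, β (S.η.app X x) = x
  β_mul : ∀ m : S.obj (S.obj X), β (S.μ.app X m) = β (S.map (TypeCat.ofHom β) m)
  tensor_law : ∀ {Y Z : Type u} (p : T.obj Y) (q : S.obj Z) (f : Y × Z → X),
    α (T.map (TypeCat.ofHom (fun y => β (S.map (TypeCat.ofHom (fun z => f (y, z))) q))) p) =
      β (S.map (TypeCat.ofHom (fun z => α (T.map (TypeCat.ofHom (fun y => f (y, z))) p))) q)

def TensorStructure.toTensorAlg {T S : Monad (Type u)} {X : Type u} (P : TensorStructure T S X) :
    TensorAlg T S :=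
  ⟨X, P.α, P.β, P.α_unit, P.α_mul, P.β_unit, P.β_mul, P.tensor_law⟩

def TensorAlg.toTensorStructure {T S : Monad (Type u)} (A : TensorAlg T S) :
    TensorStructure T S A.carrier :=
  ⟨A.α, A.β, A.α_unit, A.α_mul, A.β_unit, A.β_mul, A.tensor_law⟩

lemma TensorAlg.exists_small_factorization {T S : Monad (Type u)} {X K : Type u}
    (hK : ∀ A : TensorAlg T S, A.Reachable (Cardinal.mk X) →
      Cardinal.mk A.carrier ≤ Cardinal.mk K)
    (D : TensorAlg T S) (h : X → D.carrier) :
    ∃ (s : Set K) (P : TensorStructure T S s) (a : X → s) (φ : P.toTensorAlg ⟶ D),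
      φ.toFun ∘ a = h := by
  obtain ⟨A, a, φ, hA, hφ⟩ := exists_reachable_factorization D h
  obtain ⟨j⟩ := (Cardinal.le_def _ _).1 (hK A hA)
  let e := Equiv.ofInjective j j.injective
  refine ⟨_, (A.transport e).toTensorStructure, e ∘ a, transportHom e ≫ φ, ?_⟩
  rw [← hφ]
  exact funext fun x => congrArg φ.toFun (e.symm_apply_apply (a x))

lemma solutionSetCondition_forgetTAlg {T S : Monad (Type u)}
    (hb : ∀ c : Cardinal.{u}, ∃ b : Cardinal.{u},
      ∀ A : TensorAlg T S, A.Reachable c → Cardinal.mk A.carrier ≤ b) :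
    SolutionSetCondition.{u} (forgetTAlg T S) := by
  intro X
  obtain ⟨b, hb⟩ := hb (Cardinal.mk X)
  refine ⟨Σ s : Set b.out, TensorStructure T S s × (X → s), fun i => i.2.1.toTensorAlg,
    fun i => ↾i.2.2, fun D h => ?_⟩
  obtain ⟨s, P, a, φ, hφ⟩ :=
    TensorAlg.exists_small_factorization (K := b.out)
      (fun A hA => (hb A hA).trans_eq b.mk_out.symm) D h
  exact ⟨⟨s, P, a⟩, φ, TypeCat.homEquiv.injective hφ⟩

/-- Corollary 3.8: the (possibly spurious) tensor `T ⊗ S` exists, i.e. the forgetful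
functor from `(T,S)`-tensor algebras has a left adjoint, iff for every cardinal `c`
the cardinalities of `c`-reachable tensor algebras are bounded. -/
theorem tensor_exists_iff_reachable_bounded (T S : Monad (Type u)) :
    (∃ F : Type u ⥤ TensorAlg T S, Nonempty (F ⊣ forgetTAlg T S)) ↔
      ∀ c : Cardinal.{u}, ∃ b : Cardinal.{u},
        ∀ A : TensorAlg T S, A.Reachable c → Cardinal.mk A.carrier ≤ b := by
  constructor
  · rintro ⟨F, ⟨adj⟩⟩ c
    exact ⟨_, fun A hA => hA.mk_le_of_adjunction adj⟩
  · intro hb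
    have := isRightAdjoint_of_preservesLimits_of_solutionSetCondition
      (forgetTAlg T S) (solutionSetCondition_forgetTAlg hb)
    exact ⟨(forgetTAlg T S).leftAdjoint, ⟨Adjunction.ofIsRightAdjoint _⟩⟩
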